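/- Let G be a 2-connected graph and C a longest cycle of G such that G − C has a component H with at least 2 vertices. Then there exist two distinct vertices v1, v2 on C each having a neighbor in H such that |N_G(v1; H) ∪ N_G(v2; H)| ≥ 2, and moreover both arcs of C between v1 and v2 contain at least 4 vertices (including endpoints). -/

import Mathlib

open SimpleGraph

variable {V : Type*} [Fintype V] [DecidableEq V]

/-- `p 0, p 1, ..., p (n-1)` is a path of order `n` in `G`. -/
def IsPathOn (G : SimpleGraph V) (n : ℕ) (p : ℕ → V) : Prop :=
  (∀ i j, i < n → j < n → p i = p j → i = j) ∧
  (∀ i, i + 1 < n → G.Adj (p i) (p (i + 1)))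

/-- An induced path of order `n` in `G`. -/
def IsInducedPathOn (G : SimpleGraph V) (n : ℕ) (p : ℕ → V) : Prop :=
  IsPathOn G n p ∧ ∀ i j, i < n → j < n → G.Adj (p i) (p j) → (i + 1 = j ∨ j + 1 = i)

/-- `G` contains no induced path on 5 vertices. -/
def P5Free (G : SimpleGraph V) : Prop := ¬ ∃ p : ℕ → V, IsInducedPathOn G 5 p

/-- `G` contains no induced `K₄` minus an edge. -/
def K4mFree (G : SimpleGraph V) : Prop :=
  ¬ ∃ a b c d : V, a ≠ b ∧ a ≠ c ∧ a ≠ d ∧ b ≠ c ∧ b ≠ d ∧ c ≠ d ∧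
    G.Adj a b ∧ G.Adj a c ∧ G.Adj a d ∧ G.Adj b c ∧ G.Adj b d ∧ ¬ G.Adj c d

/-- `G` contains no induced `W*` (two triangles `abc`, `def` joined by the edge `cd`). -/
def WStarFree (G : SimpleGraph V) : Prop :=
  ¬ ∃ a b c d e f : V, List.Nodup [a, b, c, d, e, f] ∧
    G.Adj a b ∧ G.Adj b c ∧ G.Adj a c ∧ G.Adj d e ∧ G.Adj e f ∧ G.Adj d f ∧ G.Adj c d ∧
    ¬ G.Adj a d ∧ ¬ G.Adj a e ∧ ¬ G.Adj a f ∧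
    ¬ G.Adj b d ∧ ¬ G.Adj b e ∧ ¬ G.Adj b f ∧ ¬ G.Adj c e ∧ ¬ G.Adj c f

/-- `G` contains no induced paw (triangle `abc` with pendant edge `cd`). -/
def Z1Free (G : SimpleGraph V) : Prop :=
  ¬ ∃ a b c d : V, List.Nodup [a, b, c, d] ∧
    G.Adj a b ∧ G.Adj b c ∧ G.Adj a c ∧ G.Adj c d ∧ ¬ G.Adj a d ∧ ¬ G.Adj b d

/-- An (oriented) cycle of length `n` in `G`, as an injective map `ZMod n → V`
with consecutive vertices adjacent. -/
def IsCycleOn (G : SimpleGraph V) (n : ℕ) (c : ZMod n → V) : Prop :=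
  3 ≤ n ∧ Function.Injective c ∧ ∀ i, G.Adj (c i) (c (i + 1))

/-- A longest cycle of `G`. -/
def IsLongestCycle (G : SimpleGraph V) (n : ℕ) (c : ZMod n → V) : Prop :=
  IsCycleOn G n c ∧ ∀ (m : ℕ) (d : ZMod m → V), IsCycleOn G m d → m ≤ n

/-- A dominating cycle: every edge of `G` is incident with a vertex of the cycle. -/
def DominatingCycle (G : SimpleGraph V) (n : ℕ) (c : ZMod n → V) : Prop :=
  IsCycleOn G n c ∧ ∀ u v : V, G.Adj u v → u ∈ Set.range c ∨ v ∈ Set.range c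

/-- `H` is (the vertex set of) a connected component of `G - R`. -/
def IsCompOff (G : SimpleGraph V) (R : Set V) (H : Set V) : Prop :=
  H.Nonempty ∧ Disjoint H R ∧ (G.induce H).Connected ∧
  ∀ u v : V, u ∈ H → v ∉ H → v ∉ R → ¬ G.Adj u v

/-- `μ`: the maximum order of a component of `G - R`. -/
noncomputable def muC (G : SimpleGraph V) (R : Set V) : ℕ :=
  sSup {k | ∃ H : Set V, IsCompOff G R H ∧ H.ncard = k}

/-- `ω`: the number of components of `G - R` of maximum order. -/
noncomputable def omegaC (G : SimpleGraph V) (R : Set V) : ℕ :=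
  {H : Set V | IsCompOff G R H ∧ H.ncard = muC G R}.ncard

/-- `G` is 2-connected: at least 3 vertices, connected, and removing any
vertex leaves it connected. -/
def TwoConnected (G : SimpleGraph V) : Prop :=
  3 ≤ Fintype.card V ∧ G.Connected ∧
  ∀ v : V, (G.induce ({v}ᶜ : Set V)).Connected

/-- The set of indices of `ZMod n` encountered going from `s` to `t` in the
positive direction (including both `s` and `t`). -/
def seg (n : ℕ) (s t : ZMod n) : Set (ZMod n) :=
  {x | ∃ k : ℕ, x = s + (k : ZMod n) ∧ ∀ m : ℕ, m < k → s + (m : ZMod n) ≠ t}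

/-- `G` is complete multipartite: the vertices partition into classes of an
equivalence relation which are independent, with all edges between classes. -/
def CompleteMultipartite (G : SimpleGraph V) : Prop :=
  ∃ r : V → V → Prop, Equivalence r ∧ ∀ u v : V, u ≠ v → (G.Adj u v ↔ ¬ r u v)

/-- A `C`-path (for `R = V(C)`): a path of order at least 2 whose ends lie in
`R` and whose internal vertices avoid `R`. -/
def IsCPath (G : SimpleGraph V) (R : Set V) (m : ℕ) (p : ℕ → V) : Prop :=
  2 ≤ m ∧ IsPathOn G m p ∧ p 0 ∈ R ∧ p (m - 1) ∈ R ∧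
  ∀ i, 0 < i → i < m - 1 → p i ∉ R

/-!
Two-connectivity yields distinct cycle vertices `c i₁`, `c i₂` with distinct neighbours
`x₁ ≠ x₂` in `H`. Closing either arc of `C` between `c i₁` and `c i₂` with an `x₁`–`x₂` path
in `H` gives a cycle with at least two vertices off `C`, so by maximality each arc has at most
`n - 2` vertices. The two arcs share only their ends, so each has at least `4` vertices.
-/
theorem ZMod.val_sub_add_val_sub {n : ℕ} [NeZero n] {a b : ZMod n} (h : a ≠ b) :
    (a - b).val + (b - a).val = n := by
  have : NeZero (b - a) := ⟨sub_ne_zero.mpr h.symm⟩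
  rw [← neg_sub, ZMod.val_neg_of_ne_zero]
  have := ZMod.val_lt (b - a)
  omega

theorem ncard_seg {n : ℕ} [NeZero n] (s t : ZMod n) : (seg n s t).ncard = (t - s).val + 1 := by
  set d := (t - s).val
  have hcast : (Set.Iio n).InjOn ((↑) : ℕ → ZMod n) := CharP.natCast_injOn_Iio (ZMod n) n
  have hd : s + (d : ZMod n) = t := by simp [d]
  have hdn : d < n := ZMod.val_lt _
  have hfirst : ∀ m < n, s + (m : ZMod n) = t → m = d := fun m hm h =>
    hcast hm hdn (add_left_cancel (h.trans hd.symm))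
  have hseg : seg n s t = (fun k : ℕ => s + (k : ZMod n)) '' Set.Iio (d + 1) := by
    ext x
    simp only [seg, Set.mem_ofPred_eq, Set.mem_image, Set.mem_Iio]
    constructor
    · rintro ⟨k, rfl, hk⟩
      exact ⟨k, Nat.lt_succ_of_le (not_lt.mp fun h => hk d h hd), rfl⟩
    · rintro ⟨k, hk, rfl⟩
      refine ⟨k, rfl, fun m hm h => ?_⟩
      have := hfirst m (by omega) h
      omega
  rw [hseg, Set.InjOn.ncard_image, Set.ncard_Iio_nat]
  intro a ha b hb hab
  rw [Set.mem_Iio] at ha hb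
  exact hcast (by simp only [Set.mem_Iio]; omega) (by simp only [Set.mem_Iio]; omega)
    (add_left_cancel hab)

section Cycles

variable {α : Type*} {G : SimpleGraph α}

theorem exists_isCycleOn_of_list {Q : List α} (hQ : Q.Nodup) (hchain : Q.IsChain G.Adj)
    (hlen : 3 ≤ Q.length) {a b : α} (ha : Q.getLast? = some a) (hb : Q.head? = some b)
    (hab : G.Adj a b) : ∃ d : ZMod Q.length → α, IsCycleOn G Q.length d := by
  have : NeZero Q.length := ⟨by omega⟩
  have : Fact (1 < Q.length) := ⟨by omega⟩
  refine ⟨fun i => Q[i.val]'(ZMod.val_lt i), hlen, fun i j hij => ?_, fun i => ?_⟩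
  · exact ZMod.val_injective _ (Fin.mk.inj_iff.mp (List.nodup_iff_injective_get.mp hQ hij))
  · have hsucc : (i + 1).val = (i.val + 1) % Q.length := by rw [ZMod.val_add, ZMod.val_one]
    by_cases hi : i.val + 1 < Q.length
    · simp only [hsucc, Nat.mod_eq_of_lt hi]
      exact List.isChain_iff_getElem.mp hchain i.val hi
    · have hlast : i.val = Q.length - 1 := by have := ZMod.val_lt i; omega
      have hwrap : (i + 1).val = 0 := by
        rw [hsucc, hlast, Nat.sub_add_cancel (by omega), Nat.mod_self]
      rw [List.getLast?_eq_getElem?, List.getElem?_eq_some_iff] at ha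
      rw [List.head?_eq_getElem?, List.getElem?_eq_some_iff] at hb
      obtain ⟨_, rfl⟩ := ha
      obtain ⟨_, rfl⟩ := hb
      simpa only [hlast, hwrap] using hab

theorem IsLongestCycle.length_le_of_list {n : ℕ} {c : ZMod n → α} (hc : IsLongestCycle G n c)
    {Q : List α} (hQ : Q.Nodup) (hchain : Q.IsChain G.Adj) (hlen : 3 ≤ Q.length) {a b : α}
    (ha : Q.getLast? = some a) (hb : Q.head? = some b) (hab : G.Adj a b) : Q.length ≤ n :=
  let ⟨_, hd⟩ := exists_isCycleOn_of_list hQ hchain hlen ha hb hab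
  hc.2 _ _ hd

variable {n : ℕ} {c : ZMod n → α}

def cycleArc (c : ZMod n → α) (s : ZMod n) (d : ℕ) : List α :=
  (List.range (d + 1)).map fun j : ℕ => c (s + (j : ZMod n))

@[simp]
theorem length_cycleArc (s : ZMod n) (d : ℕ) : (cycleArc c s d).length = d + 1 := by
  simp [cycleArc]

theorem head?_cycleArc (s : ZMod n) (d : ℕ) : (cycleArc c s d).head? = some (c s) := by
  simp [cycleArc, List.head?_range]

theorem getLast?_cycleArc (s : ZMod n) (d : ℕ) :
    (cycleArc c s d).getLast? = some (c (s + d)) := by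
  simp [cycleArc, List.getLast?_range]

theorem mem_range_of_mem_cycleArc {s : ZMod n} {d : ℕ} {v : α} (hv : v ∈ cycleArc c s d) :
    v ∈ Set.range c := by
  obtain ⟨j, -, rfl⟩ := List.mem_map.mp hv
  exact Set.mem_range_self _

theorem IsCycleOn.nodup_cycleArc (hc : IsCycleOn G n c) (s : ZMod n) {d : ℕ} (hd : d < n) :
    (cycleArc c s d).Nodup := by
  refine List.nodup_range.map_on fun j hj k hk hjk => ?_
  rw [List.mem_range] at hj hk
  exact CharP.natCast_injOn_Iio (ZMod n) n (show j < n by omega) (show k < n by omega)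
    (add_left_cancel (hc.2.1 hjk))

theorem IsCycleOn.isChain_cycleArc (hc : IsCycleOn G n c) (s : ZMod n) (d : ℕ) :
    (cycleArc c s d).IsChain G.Adj := by
  rw [cycleArc, List.isChain_map, List.isChain_range_succ]
  intro m _
  simpa [add_assoc] using hc.2.2 (s + m)

theorem IsLongestCycle.arc_add_length_le (hc : IsLongestCycle G n c) {M : List α}
    (hM : M.Nodup) (hchain : M.IsChain G.Adj) (hoff : ∀ v ∈ M, v ∉ Set.range c)
    (hlen : 2 ≤ M.length) {s t : ZMod n} {x y : α} (hx : M.head? = some x)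
    (hy : M.getLast? = some y) (htx : G.Adj (c t) x) (hys : G.Adj y (c s)) :
    (t - s).val + 1 + M.length ≤ n := by
  have : NeZero n := ⟨by have := hc.1.1; omega⟩
  have hend : s + ((t - s).val : ZMod n) = t := by simp
  have hQ := hc.length_le_of_list (Q := cycleArc c s (t - s).val ++ M) (a := y) (b := c s)
    (List.nodup_append.mpr ⟨hc.1.nodup_cycleArc s (ZMod.val_lt _), hM,
      fun a ha b hb hab => hoff b hb (hab ▸ mem_range_of_mem_cycleArc ha)⟩)
    (List.isChain_append.mpr ⟨hc.1.isChain_cycleArc s _, hchain, by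
      simpa [getLast?_cycleArc, hx, hend] using htx⟩)
    (by simp only [List.length_append, length_cycleArc]; omega) (by simp [hy])
    (by simp [head?_cycleArc]) hys
  simpa using hQ

theorem exists_nodup_isChain_of_induce_preconnected {H : Set α} (hH : (G.induce H).Preconnected)
    {x y : α} (hx : x ∈ H) (hy : y ∈ H) (hxy : x ≠ y) :
    ∃ M : List α, M.Nodup ∧ M.IsChain G.Adj ∧ (∀ v ∈ M, v ∈ H) ∧ 2 ≤ M.length ∧
      M.head? = some x ∧ M.getLast? = some y := by
  classical
  obtain ⟨p⟩ := hH ⟨x, hx⟩ ⟨y, hy⟩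
  let q := p.toPath
  refine ⟨q.1.support.map Subtype.val, q.2.support_nodup.map Subtype.val_injective,
    List.isChain_map_of_isChain Subtype.val (fun _ _ h => h) q.1.isChain_adj_support,
    fun v hv => by obtain ⟨⟨v, hvH⟩, -, rfl⟩ := List.mem_map.mp hv; exact hvH, ?_,
    by rw [List.head?_map, List.head?_eq_some_head q.1.support_ne_nil, Walk.head_support]; rfl,
    by rw [List.getLast?_map, List.getLast?_eq_some_getLast q.1.support_ne_nil,
      Walk.getLast_support]; rfl⟩
  have : q.1.length ≠ 0 := fun h => hxy (congrArg Subtype.val (q.1.eq_of_length_eq_zero h))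
  simp only [List.length_map, Walk.length_support]
  omega

theorem TwoConnected.exists_adj_of_isCompOff [Fintype α] (hG : TwoConnected G) {R H : Set α}
    (hH : IsCompOff G R H) {w y z : α} (hy : y ∈ H) (hyw : y ≠ w) (hz : z ∉ H) (hzw : z ≠ w) :
    ∃ u ∈ H, ∃ v ∈ R, u ≠ w ∧ v ≠ w ∧ G.Adj u v := by
  obtain ⟨p⟩ := (hG.2.2 w).preconnected ⟨y, hyw⟩ ⟨z, hzw⟩
  obtain ⟨d, -, hu, hv⟩ := p.exists_boundary_dart (Subtype.val ⁻¹' H) hy hz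
  refine ⟨d.fst, hu, d.snd, ?_, d.fst.2, d.snd.2, d.adj⟩
  by_contra hvR
  exact hH.2.2.2 _ _ hu hv hvR d.adj

theorem TwoConnected.exists_two_attachments [Fintype α] (hG : TwoConnected G)
    (hc : IsCycleOn G n c) {H : Set α} (hH : IsCompOff G (Set.range c) H)
    (hH2 : 2 ≤ H.ncard) :
    ∃ (i₁ i₂ : ZMod n) (x₁ x₂ : α), c i₁ ≠ c i₂ ∧ x₁ ∈ H ∧ x₂ ∈ H ∧ x₁ ≠ x₂ ∧
      G.Adj (c i₁) x₁ ∧ G.Adj (c i₂) x₂ := by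
  have : Fact (1 < n) := ⟨by have := hc.1; omega⟩
  have hcH : ∀ i, c i ∉ H := fun i hi => Set.disjoint_left.mp hH.2.1 hi (Set.mem_range_self i)
  have hne : ∀ {u : α} {i : ZMod n}, u ∈ H → c i ≠ u := fun hu h => hcH _ (h ▸ hu)
  obtain ⟨y₀, y₁, hy₀, hy₁, hy₀₁⟩ := (Set.one_lt_ncard_iff (s := H)).mp (by omega)
  obtain ⟨u, hu, -, ⟨i, rfl⟩, huy₁, -, hui⟩ :=
    hG.exists_adj_of_isCompOff hH hy₀ hy₀₁ (hcH 0) (hne hy₁)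
  have hsucc : c (i + 1) ≠ c i := fun h =>
    one_ne_zero (add_left_cancel ((hc.2.1 h).trans (add_zero i).symm))
  obtain ⟨u', hu', -, ⟨j, rfl⟩, -, hji, hu'j⟩ :=
    hG.exists_adj_of_isCompOff hH hu (hne hu).symm (hcH (i + 1)) hsucc
  rcases eq_or_ne u' u with rfl | huu'
  · -- `u'` sees both `c i` and `c j`, so an `H`-vertex other than `u'` completes a pair
    obtain ⟨u'', hu'', -, ⟨k, rfl⟩, hu''u, -, hu''k⟩ :=
      hG.exists_adj_of_isCompOff hH hy₁ huy₁.symm (hcH 0) (hne hu)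
    by_cases hki : c k = c i
    · exact ⟨k, j, u'', u', hki ▸ hji.symm, hu'', hu', hu''u, hu''k.symm, hu'j.symm⟩
    · exact ⟨k, i, u'', u', hki, hu'', hu', hu''u, hu''k.symm, hui.symm⟩
  · exact ⟨i, j, u, u', hji.symm, hu, hu', huu'.symm, hui.symm, hu'j.symm⟩

theorem IsLongestCycle.val_sub_add_three_le (hc : IsLongestCycle G n c) {H : Set α}
    (hH : (G.induce H).Preconnected) (hoff : Disjoint H (Set.range c)) {s t : ZMod n}
    {x y : α} (hx : x ∈ H) (hy : y ∈ H) (hxy : x ≠ y) (htx : G.Adj (c t) x)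
    (hys : G.Adj y (c s)) : (t - s).val + 3 ≤ n := by
  obtain ⟨M, hM, hchain, hMH, hlen, hhead, hlast⟩ :=
    exists_nodup_isChain_of_induce_preconnected hH hx hy hxy
  have := hc.arc_add_length_le hM hchain (fun v hv => Set.disjoint_left.mp hoff (hMH v hv)) hlen
    hhead hlast htx hys
  omega

end Cycles

theorem stmt_18 (G : SimpleGraph V) (h2 : TwoConnected G)
    (n : ℕ) (c : ZMod n → V) (hc : IsLongestCycle G n c)
    (H : Set V) (hH : IsCompOff G (Set.range c) H) (hH2 : 2 ≤ H.ncard) :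
    ∃ i1 i2 : ZMod n, c i1 ≠ c i2 ∧
      (∃ x ∈ H, G.Adj (c i1) x) ∧ (∃ x ∈ H, G.Adj (c i2) x) ∧
      2 ≤ ({x | x ∈ H ∧ G.Adj (c i1) x} ∪ {x | x ∈ H ∧ G.Adj (c i2) x}).ncard ∧
      4 ≤ (seg n i1 i2).ncard ∧ 4 ≤ (seg n i2 i1).ncard := by
  have : NeZero n := ⟨by have := hc.1.1; omega⟩
  obtain ⟨i₁, i₂, x₁, x₂, hne, hx₁, hx₂, hx₁₂, h₁, h₂⟩ :=
    h2.exists_two_attachments hc.1 hH hH2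
  have hconn := hH.2.2.1.preconnected
  have hb₁₂ := hc.val_sub_add_three_le hconn hH.2.1 hx₂ hx₁ hx₁₂.symm h₂ h₁.symm
  have hb₂₁ := hc.val_sub_add_three_le hconn hH.2.1 hx₁ hx₂ hx₁₂ h₁ h₂.symm
  have hsum := ZMod.val_sub_add_val_sub (fun h => hne (congrArg c h))
  refine ⟨i₁, i₂, hne, ⟨x₁, hx₁, h₁⟩, ⟨x₂, hx₂, h₂⟩, ?_, ?_, ?_⟩
  · calc 2 = ({x₁, x₂} : Set V).ncard := (Set.ncard_pair hx₁₂).symm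
      _ ≤ _ := Set.ncard_le_ncard (by
          rintro _ (rfl | rfl)
          exacts [Or.inl ⟨hx₁, h₁⟩, Or.inr ⟨hx₂, h₂⟩])
  · rw [ncard_seg]
    omega
  · rw [ncard_seg]
    omega
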